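/- Let p and q be primes and m, n natural numbers with p^m = q^n + 1. Then one of the following holds: (1) n = 1, m is prime, p = 2 and q = 2^m - 1; (2) m = 1, n is a power of 2, q = 2 and p = 2^n + 1; (3) p = n = 3 and q = m = 2. -/
import Mathlib

open Finset in
private lemma auxCast {S : ℤ} {k : ℕ} (hk : Odd k)
    (hS : (S : ZMod 2) = ∑ i ∈ range k, ((1 : ZMod 2)) ^ i) : Odd S := by
  have h1 : (S : ZMod 2) = 1 := by
    rw [hS]
    simp only [one_pow, Finset.sum_const, Finset.card_range, nsmul_eq_mul, mul_one]
    obtain ⟨j, rfl⟩ := hk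
    push_cast
    have h2 : (2 : ZMod 2) = 0 := by decide
    rw [h2]; ring
  rw [Int.odd_iff]
  rcases Int.emod_two_eq S with he | he
  · exfalso
    have : (S : ZMod 2) = 0 := (ZMod.intCast_zmod_eq_zero_iff_dvd S 2).mpr (Int.dvd_of_emod_eq_zero he)
    rw [h1] at this
    exact one_ne_zero this
  · exact he

-- Odd S dividing a power of two, with 1 < S : contradiction
private lemma auxOddDvd {S : ℤ} {e : ℕ} (hodd : Odd S) (hS : 1 < S) (hdvd : S ∣ 2 ^ e) : False := by
  obtain ⟨t, ht⟩ := hodd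
  have hcop : IsCoprime S (2 : ℤ) := ⟨1, -t, by linarith⟩
  have : IsUnit S := (hcop.pow_right).isUnit_of_dvd hdvd
  rcases Int.isUnit_iff.mp this with h | h <;> omega

open Finset in
/-- x odd, k odd > 1: x^k + 1 is not a power of 2. -/
private lemma aux1 {x k e : ℕ} (hx : Odd x) (hx2 : 2 ≤ x) (hk : Odd k) (hk1 : 1 < k)
    (h : x ^ k + 1 = 2 ^ e) : False := by
  set S : ℤ := ∑ i ∈ range k, (-(x : ℤ)) ^ i with hSdef
  have hgeom := geom_sum_mul (-(x : ℤ)) k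
  rw [hk.neg_pow] at hgeom
  have hfac : S * ((x : ℤ) + 1) = (x : ℤ) ^ k + 1 := by linarith [hgeom]
  have hz : (x : ℤ) ^ k + 1 = 2 ^ e := by exact_mod_cast h
  have hodd : Odd S := by
    apply auxCast hk
    rw [hSdef]
    push_cast
    congr 1
    funext i
    congr 1
    obtain ⟨j, rfl⟩ := hx
    push_cast
    have h2 : (2 : ZMod 2) = 0 := by decide
    rw [h2]; ring_nf; decide
  have hx2' : (x : ℤ) ^ 2 ≤ (x : ℤ) ^ k := by
    apply pow_le_pow_right₀ (by exact_mod_cast Nat.one_le_of_lt hx2) hk1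
  have hxz : (2 : ℤ) ≤ (x : ℤ) := by exact_mod_cast hx2
  have hS1 : 1 < S := by nlinarith [hfac, hx2', hxz]
  exact auxOddDvd hodd hS1 ⟨(x : ℤ) + 1, by rw [← hz, ← hfac]⟩

open Finset in
/-- x odd ≥ 3, k odd > 1: x^k - 1 is not a power of 2. -/
private lemma aux2 {x k e : ℕ} (hx : Odd x) (hx2 : 3 ≤ x) (hk : Odd k) (hk1 : 1 < k)
    (h : x ^ k = 2 ^ e + 1) : False := by
  set S : ℤ := ∑ i ∈ range k, ((x : ℤ)) ^ i with hSdef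
  have hfac : S * ((x : ℤ) - 1) = (x : ℤ) ^ k - 1 := geom_sum_mul (x : ℤ) k
  have hz : (x : ℤ) ^ k = 2 ^ e + 1 := by exact_mod_cast h
  have hodd : Odd S := by
    apply auxCast hk
    rw [hSdef]
    push_cast
    congr 1
    funext i
    congr 1
    obtain ⟨j, rfl⟩ := hx
    push_cast
    have h2 : (2 : ZMod 2) = 0 := by decide
    rw [h2]; ring
  have hx2' : (x : ℤ) ^ 2 ≤ (x : ℤ) ^ k := by
    apply pow_le_pow_right₀ (by exact_mod_cast Nat.one_le_of_lt hx2) hk1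
  have hxz : (3 : ℤ) ≤ (x : ℤ) := by exact_mod_cast hx2
  have hS1 : 1 < S := by nlinarith [hfac, hx2', hxz]
  exact auxOddDvd hodd hS1 ⟨(x : ℤ) - 1, by rw [hfac]; linarith [hz]⟩

/-- x odd ≥ 3 with x^2 = 2^e + 1 forces x = 3, e = 3. -/
private lemma aux3 {x e : ℕ} (hx : Odd x) (hx3 : 3 ≤ x) (h : x ^ 2 = 2 ^ e + 1) :
    x = 3 ∧ e = 3 := by
  have hz : (x : ℤ) ^ 2 = 2 ^ e + 1 := by exact_mod_cast h
  have key : (x - 1) * (x + 1) = 2 ^ e := by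
    zify [show 1 ≤ x by omega]
    linear_combination hz
  obtain ⟨a, ha, hae⟩ := (Nat.dvd_prime_pow Nat.prime_two).mp ⟨x + 1, key.symm⟩
  obtain ⟨b, hb, hbe⟩ := (Nat.dvd_prime_pow Nat.prime_two).mp
    (Dvd.intro_left (x - 1) key : (x + 1) ∣ 2 ^ e)
  have ha2 : 2 ≤ 2 ^ a := by rw [← hae]; omega
  have hb4 : 4 ≤ 2 ^ b := by rw [← hbe]; omega
  have ha1 : a = 1 := by
    by_contra hne
    have ha2' : 2 ≤ a := by
      rcases Nat.lt_or_ge a 2 with h' | h'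
      · interval_cases a <;> omega
      · exact h'
    have hb2 : 2 ≤ b := by
      have : (2:ℕ) ^ 2 ≤ 2 ^ b := by omega
      exact (Nat.pow_le_pow_iff_right (by norm_num)).mp this
    have d1 : (4 : ℕ) ∣ 2 ^ a := by
      calc (4 : ℕ) = 2 ^ 2 := by norm_num
      _ ∣ 2 ^ a := pow_dvd_pow 2 ha2'
    have d2 : (4 : ℕ) ∣ 2 ^ b := by
      calc (4 : ℕ) = 2 ^ 2 := by norm_num
      _ ∣ 2 ^ b := pow_dvd_pow 2 hb2
    omega
  rw [ha1] at hae
  have hxa : x = 3 := by omega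
  subst hxa
  refine ⟨rfl, ?_⟩
  have h8 : (2 : ℕ) ^ e = 2 ^ 3 := by norm_num at key; omega
  exact Nat.pow_right_injective le_rfl h8

theorem stmt_0 (p q m n : ℕ) (hp : p.Prime) (hq : q.Prime)
    (hm : 0 < m) (hn : 0 < n) (h : p ^ m = q ^ n + 1) :
    (n = 1 ∧ m.Prime ∧ p = 2 ∧ q = 2 ^ m - 1) ∨
    (m = 1 ∧ (∃ k : ℕ, n = 2 ^ k) ∧ q = 2 ∧ p = 2 ^ n + 1) ∨
    (p = 3 ∧ n = 3 ∧ q = 2 ∧ m = 2) := by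
  rcases hp.eq_two_or_odd' with hp2 | hpodd
  · subst hp2
    rcases hq.eq_two_or_odd' with hq2 | hqodd
    · subst hq2
      exfalso
      have h1 : 2 ∣ 2 ^ m := dvd_pow_self 2 hm.ne'
      have h2 : 2 ∣ 2 ^ n := dvd_pow_self 2 hn.ne'
      omega
    · rcases Nat.even_or_odd n with hne | hno
      · -- n even : impossible
        exfalso
        obtain ⟨t, rfl⟩ := hne
        have ht : 0 < t := by omega
        obtain ⟨s, hs⟩ := hqodd.pow (n := t)
        have hsq : q ^ (t + t) = (q ^ t) ^ 2 := by ring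
        have hexp : (2 * s + 1) ^ 2 + 1 = 4 * (s * s + s) + 2 := by ring
        rw [hsq, hs] at h
        have hs1 : 1 ≤ s := by
          by_contra hs0
          have : s = 0 := by omega
          subst this
          have : 3 ≤ q := by have := hq.two_le; rcases hqodd with ⟨j, hj⟩; omega
          have : 3 ≤ q ^ t := le_trans this (Nat.le_self_pow ht.ne' q)
          omega
        rcases Nat.lt_or_ge m 2 with hm2 | hm2
        · have hm1 : m = 1 := by omega
          subst hm1
          rw [hexp] at h
          simp at h
          omega
        · have h4 : 4 ∣ 2 ^ m := by
            calc (4 : ℕ) = 2 ^ 2 := by norm_num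
            _ ∣ 2 ^ m := pow_dvd_pow 2 hm2
          rw [hexp] at h
          omega
      · rcases Nat.eq_or_lt_of_le hn with h1 | hn1
        · -- n = 1
          left
          rw [← h1, pow_one] at h
          have hq1 : q = 2 ^ m - 1 := by omega
          have hm1 : m ≠ 1 := by
            rintro rfl
            have := hq.two_le
            omega
          have hmp := Nat.prime_of_pow_sub_one_prime hm1 (by rwa [← hq1])
          exact ⟨h1.symm, hmp.2, rfl, hq1⟩
        · exact (aux1 hqodd hq.two_le hno hn1 h.symm).elim
  · rcases hq.eq_two_or_odd' with hq2 | hqodd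
    · subst hq2
      have hp3 : 3 ≤ p := by
        have := hp.two_le; rcases hpodd with ⟨j, hj⟩; omega
      rcases Nat.even_or_odd m with hme | hmo
      · -- m even : the (3,2) solution
        obtain ⟨t, rfl⟩ := hme
        have ht : 0 < t := by omega
        have hx : (p ^ t) ^ 2 = 2 ^ n + 1 := by rw [← h]; ring
        have hx3 : 3 ≤ p ^ t := le_trans hp3 (Nat.le_self_pow ht.ne' p)
        obtain ⟨hp3', hn3⟩ := aux3 (hpodd.pow) hx3 hx
        have hple : p ≤ p ^ t := Nat.le_self_pow ht.ne' p
        have hpe : p = 3 := by omega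
        subst hpe
        have ht1 : t = 1 := by
          have : (3 : ℕ) ^ t = 3 ^ 1 := by rw [hp3', pow_one]
          exact Nat.pow_right_injective (by norm_num) this
        right; right
        exact ⟨rfl, hn3, rfl, by omega⟩
      · rcases Nat.eq_or_lt_of_le hm with h1 | hm1
        · -- m = 1
          right; left
          rw [← h1, pow_one] at h
          exact ⟨h1.symm, Nat.pow_of_pow_add_prime one_lt_two hn.ne' (by rwa [← h]),
            rfl, h⟩
        · exact (aux2 hpodd hp3 hmo hm1 h).elim
    · exfalso
      obtain ⟨a, ha⟩ := hpodd.pow (n := m)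
      obtain ⟨b, hb⟩ := hqodd.pow (n := n)
      omega
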